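/- arXiv:1707.07966 — 9 statements merged into one kernel-verified Lean document; each statement's English description precedes it below -/
import Mathlib

section
/- For all n ≥ 0, F_{2n+2} - 1 = ⌊Φ² · F_{2n}⌋, where F is the Fibonacci sequence and Φ is the golden ratio. -/
noncomputable def Φ : ℝ := (1 + Real.sqrt 5) / 2

/-!
Iterating `F (m + 1) - φ F m = ψ ^ m` gives `F (m + 2) - φ² F m = ψ ^ m`. For even `m = 2n`
the error term `ψ ^ (2n) = (ψ + 1) ^ n` lies in `(0, 1]`, so `φ² F (2n)` sits just below the
integer `F (2n + 2)` and its floor is `F (2n + 2) - 1`.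
-/

open Real goldenRatio

theorem fib_add_two_sub_goldenRatio_sq_mul_fib (n : ℕ) :
    (Nat.fib (n + 2) : ℝ) - φ ^ 2 * Nat.fib n = ψ ^ n := by
  linear_combination fib_succ_sub_goldenRatio_mul_fib (n + 1) +
    φ * fib_succ_sub_goldenRatio_mul_fib n + ψ ^ n * goldenRatio_add_goldenConj

theorem goldenConj_pow_two_mul_mem_Ioc (n : ℕ) : ψ ^ (2 * n) ∈ Set.Ioc 0 1 := by
  have hsq : ψ ^ 2 ∈ Set.Ioo 0 1 := by
    rw [goldenConj_sq]
    constructor <;> linarith [goldenConj_neg, neg_one_lt_goldenConj]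
  rw [pow_mul]
  exact ⟨pow_pos hsq.1 n, pow_le_one₀ hsq.1.le hsq.2.le⟩

theorem Int.floor_intCast_sub_of_mem_Ioc {α : Type*} [CommRing α] [LinearOrder α]
    [IsStrictOrderedRing α] [FloorRing α] (z : ℤ) {ε : α} (hε : ε ∈ Set.Ioc 0 1) :
    ⌊(z : α) - ε⌋ = z - 1 := by
  obtain ⟨hε0, hε1⟩ := hε
  rw [Int.floor_eq_iff]
  push_cast
  constructor <;> linarith

theorem fib_even_sub_one_eq_floor (n : ℕ) :
    (Nat.fib (2 * n + 2) : ℤ) - 1 = ⌊Φ ^ 2 * (Nat.fib (2 * n) : ℝ)⌋ := by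
  have hφ : φ ^ 2 * Nat.fib (2 * n) = ((Nat.fib (2 * n + 2) : ℤ) : ℝ) - ψ ^ (2 * n) := by
    rw [← fib_add_two_sub_goldenRatio_sq_mul_fib]
    push_cast
    ring
  rw [show Φ = φ from rfl, hφ,
    Int.floor_intCast_sub_of_mem_Ioc _ (goldenConj_pow_two_mul_mem_Ioc n)]
end

section
/- For all n ≥ 0, the pair (u_{2n}, u_{2n+1}) with u_k = F_{k+1} - 1 is a Wythoff pair; that is, there exists m ≥ 0 such that u_{2n} = ⌊Φ·m⌋ and u_{2n+1} = ⌊Φ·m⌋ + m. -/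
open Real goldenRatio

/-- `u k = F (k+1) - 1` -/
def u (k : ℕ) : ℤ := (Nat.fib (k + 1) : ℤ) - 1

lemma sqrt5_pos : (0:ℝ) < Real.sqrt 5 := Real.sqrt_pos.mpr (by norm_num)

lemma gold_mul_fib (k : ℕ) :
    goldenRatio * (Nat.fib k : ℝ) = (Nat.fib (k + 1) : ℝ) - goldenConj ^ k := by
  rw [Real.coe_fib_eq, Real.coe_fib_eq]
  have h5 : Real.sqrt 5 ≠ 0 := ne_of_gt sqrt5_pos
  have hg : goldenRatio = goldenConj + Real.sqrt 5 := by
    unfold goldenRatio goldenConj; ring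
  field_simp
  rw [pow_succ, pow_succ]
  ring

lemma goldConj_sq_mem : 0 < goldenConj ^ 2 ∧ goldenConj ^ 2 < 1 := by
  have h1 : (1:ℝ) < Real.sqrt 5 := by
    rw [show (1:ℝ) = Real.sqrt 1 by simp]
    exact Real.sqrt_lt_sqrt (by norm_num) (by norm_num)
  have h3 : Real.sqrt 5 < 3 := by
    rw [show (3:ℝ) = Real.sqrt 9 by rw [show (9:ℝ) = 3^2 by norm_num]; exact (Real.sqrt_sq (by norm_num)).symm]
    exact Real.sqrt_lt_sqrt (by norm_num) (by norm_num)
  constructor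
  · have : goldenConj ≠ 0 := by unfold goldenConj; intro h; nlinarith
    positivity
  · have habs : |goldenConj| < 1 := by
      rw [abs_lt]; unfold goldenConj; constructor <;> nlinarith
    calc goldenConj ^ 2 = |goldenConj| ^ 2 := by rw [sq_abs]
    _ < 1 := by nlinarith [abs_nonneg goldenConj]

theorem u_wythoff_pair (n : ℕ) :
    ∃ m : ℕ, u (2 * n) = ⌊Φ * (m : ℝ)⌋ ∧ u (2 * n + 1) = ⌊Φ * (m : ℝ)⌋ + m := by
  refine ⟨Nat.fib (2 * n), ?_, ?_⟩ <;>
  · have hΦ : Φ = goldenRatio := rfl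
    have key := gold_mul_fib (2 * n)
    obtain ⟨hp, hl⟩ := goldConj_sq_mem
    have hp' : 0 < goldenConj ^ (2 * n) := by
      rw [pow_mul]; positivity
    have hl' : goldenConj ^ (2 * n) ≤ 1 := by
      rw [pow_mul]; exact pow_le_one₀ (le_of_lt hp) (le_of_lt hl)
    have hfloor : ⌊Φ * (Nat.fib (2 * n) : ℝ)⌋ = (Nat.fib (2 * n + 1) : ℤ) - 1 := by
      rw [hΦ, key]
      rw [Int.floor_eq_iff]
      push_cast
      constructor <;> linarith
    rw [hfloor]
    unfold u
    push_cast [Nat.fib_add_two]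
    ring
end

section
/- For all n ≥ 1, F_{2n+3} - 1 = ⌈Φ·(F_{2n+2} - 1)⌉, i.e. with u_k = F_{k+1}-1 one has u_{2n+2} = ⌈Φ·u_{2n+1}⌉. -/
/-!
By Binet, `F (k + 1) - φ F k = ψ ^ k`, so `φ (F k - 1) = F (k + 1) - 1 - (φ - 1 + ψ ^ k)`.
For even `k > 2` the correction `φ - 1 + ψ ^ k` lies in `[0, 1)`: it is positive because
`ψ ^ k > 0`, and below `1` because `ψ ^ k < ψ ^ 2 = 2 - φ`.
-/

namespace Real

open goldenRatio

theorem goldenConj_sq_eq_two_sub_goldenRatio : ψ ^ 2 = 2 - φ := by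
  linarith [goldenConj_sq, goldenRatio_add_goldenConj]

theorem goldenConj_pow_lt_sq {k : ℕ} (hk : 2 < k) : ψ ^ k < ψ ^ 2 := by
  have habs : |ψ| < 1 := abs_lt.mpr ⟨neg_one_lt_goldenConj, goldenConj_neg.trans one_pos⟩
  calc ψ ^ k ≤ |ψ| ^ k := (le_abs_self _).trans_eq (abs_pow ψ k)
    _ < |ψ| ^ 2 := pow_lt_pow_right_of_lt_one₀ (abs_pos.mpr goldenConj_ne_zero) habs hk
    _ = ψ ^ 2 := sq_abs ψ

theorem goldenRatio_mul_fib_sub_one (k : ℕ) :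
    φ * ((Nat.fib k : ℝ) - 1) = Nat.fib (k + 1) - ψ ^ k - φ := by
  linarith [fib_succ_sub_goldenRatio_mul_fib k]

theorem ceil_goldenRatio_mul_fib_sub_one {k : ℕ} (hk : Even k) (h2 : 2 < k) :
    ⌈φ * ((Nat.fib k : ℝ) - 1)⌉ = (Nat.fib (k + 1) : ℤ) - 1 := by
  rw [Int.ceil_eq_iff, goldenRatio_mul_fib_sub_one]
  push_cast
  constructor
  · linarith [goldenConj_pow_lt_sq h2, goldenConj_sq_eq_two_sub_goldenRatio]
  · linarith [hk.pow_pos goldenConj_ne_zero, one_lt_goldenRatio]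

end Real

theorem fib_sub_one_eq_ceil (n : ℕ) (hn : 1 ≤ n) :
    (Nat.fib (2 * n + 3) : ℤ) - 1 = ⌈Φ * ((Nat.fib (2 * n + 2) : ℝ) - 1)⌉ :=
  (Real.ceil_goldenRatio_mul_fib_sub_one (k := 2 * n + 2) ⟨n + 1, by ring⟩ (by omega)).symm
end

section
/- The sets A = {⌊Φ·n⌋ : n ≥ 1} and B = {⌊Φ·n⌋ + n : n ≥ 1} are disjoint and their union is the set of all positive integers (Beatty's theorem for Φ and Φ²). -/
open Real goldenRatio

theorem Real.holderConjugate_goldenRatio : HolderConjugate φ (φ + 1) := by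
  rw [holderConjugate_iff_eq_conjExponent one_lt_goldenRatio,
    eq_div_iff (by linarith [one_lt_goldenRatio])]
  linear_combination goldenRatio_sq

theorem Irrational.disjoint_beattySeq_pos {r s : ℝ} (hrs : r.HolderConjugate s)
    (hr : Irrational r) :
    Disjoint {beattySeq r k | k > 0} {beattySeq s k | k > 0} := by
  rw [← hr.beattySeq'_pos_eq, Set.disjoint_iff_forall_ne]
  rintro _ ⟨k, -, rfl⟩ _ ⟨m, -, rfl⟩ h
  exact (compl_beattySeq' hrs).ge ⟨m, h.symm⟩ ⟨k, rfl⟩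

theorem Irrational.beattySeq_pos_union_beattySeq_pos {r s : ℝ} (hrs : r.HolderConjugate s)
    (hr : Irrational r) :
    {beattySeq r k | k > 0} ∪ {beattySeq s k | k > 0} = {n | 0 < n} :=
  (hr.disjoint_beattySeq_pos hrs).symmDiff_eq_sup.symm.trans
    (hr.beattySeq_symmDiff_beattySeq_pos hrs)

theorem setOf_pos_eq_setOf_natCast (f : ℤ → ℤ) :
    {f k | k > 0} = {x | ∃ n : ℕ, 1 ≤ n ∧ x = f n} := by
  ext x
  constructor
  · rintro ⟨k, hk, rfl⟩
    lift k to ℕ using hk.le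
    exact ⟨k, by omega, rfl⟩
  · rintro ⟨n, hn, rfl⟩
    exact ⟨n, by omega, rfl⟩

theorem beattySeq_natCast (r : ℝ) (n : ℕ) : beattySeq r n = ⌊r * n⌋ := by
  rw [beattySeq, Int.cast_natCast, mul_comm]

theorem beattySeq_add_one_natCast (r : ℝ) (n : ℕ) : beattySeq (r + 1) n = ⌊r * n⌋ + n := by
  rw [beattySeq_natCast, add_one_mul, Int.floor_add_natCast]

theorem beatty_phi :
    let A : Set ℤ := {x | ∃ n : ℕ, 1 ≤ n ∧ x = ⌊Φ * (n : ℝ)⌋}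
    let B : Set ℤ := {x | ∃ n : ℕ, 1 ≤ n ∧ x = ⌊Φ * (n : ℝ)⌋ + n}
    A ∩ B = ∅ ∧ A ∪ B = {x : ℤ | 0 < x} := by
  intro A B
  have hΦ : Φ = φ := rfl
  have hA : A = {beattySeq φ k | k > 0} := by
    simp only [A, hΦ, setOf_pos_eq_setOf_natCast, beattySeq_natCast]
  have hB : B = {beattySeq (φ + 1) k | k > 0} := by
    simp only [B, hΦ, setOf_pos_eq_setOf_natCast, beattySeq_add_one_natCast]
  rw [hA, hB, ← Set.disjoint_iff_inter_eq_empty]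
  exact ⟨goldenRatio_irrational.disjoint_beattySeq_pos holderConjugate_goldenRatio,
    goldenRatio_irrational.beattySeq_pos_union_beattySeq_pos holderConjugate_goldenRatio⟩
end

section
/- Let R₁, R₂ be short impartial rulesets on the same position set Ω, with P-position sets P₁ (normal play for R₁) and P₂ (normal play for R₂). If P₁ ∩ P₂ = ∅, then the P-positions of the push compound R₁ ⊙ R₂ (where a move is either an R₁-move, or pushing the button once, after which play continues under R₂ and the game ends by R₂'s normal-play terminal condition) are exactly P₁. -/
/-- The option relation of the push compound `R₁ ⊙ R₂`: positions are `Bool × Ω`,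
`(true, g)` means the button has not yet been pushed. `pushMove R₁ R₂ p q` means
`q` is an option of `p`. -/
def pushMove {Ω : Type*} (R₁ R₂ : Ω → Set Ω) (p q : Bool × Ω) : Prop :=
  (p.1 = true ∧ ((q.1 = true ∧ q.2 ∈ R₁ p.2) ∨ q = (false, p.2))) ∨
  (p.1 = false ∧ q.1 = false ∧ q.2 ∈ R₂ p.2)

theorem push_P_positions_eq_P1
    {Ω : Type*} (R₁ R₂ : Ω → Set Ω)
    (hwf1 : WellFounded (fun g' g => g' ∈ R₁ g))
    (hwf2 : WellFounded (fun g' g => g' ∈ R₂ g))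
    (P₁ P₂ : Ω → Prop)
    (hP₁ : ∀ g, P₁ g ↔ ∀ g' ∈ R₁ g, ¬ P₁ g')
    (hP₂ : ∀ g, P₂ g ↔ ∀ g' ∈ R₂ g, ¬ P₂ g')
    (hdisj : ∀ g, ¬ (P₁ g ∧ P₂ g))
    (Pc : Bool × Ω → Prop)
    (hPc : ∀ p, Pc p ↔ ∀ q, pushMove R₁ R₂ p q → ¬ Pc q) :
    ∀ g, Pc (true, g) ↔ P₁ g := by
  have hfalse : ∀ g, Pc (false, g) ↔ P₂ g := by
    intro g
    induction g using hwf2.induction with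
    | _ g ih =>
      rw [hPc, hP₂]
      constructor
      · intro h g' hg' hP
        exact h (false, g') (Or.inr ⟨rfl, rfl, hg'⟩) ((ih g' hg').mpr hP)
      · intro h q hq hPq
        rcases hq with ⟨h1, _⟩ | ⟨_, h1, h2⟩
        · simp at h1
        · obtain ⟨b, x⟩ := q
          simp only at h1 h2
          subst h1
          exact h x h2 ((ih x h2).mp hPq)
  intro g
  induction g using hwf1.induction with
  | _ g ih =>
    rw [hPc]
    constructor
    · intro h
      rw [hP₁]
      intro g' hg' hP
      exact h (true, g') (Or.inl ⟨rfl, Or.inl ⟨rfl, hg'⟩⟩) ((ih g' hg').mpr hP)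
    · intro h q hq hPq
      rcases hq with ⟨_, ⟨h1, h2⟩ | h1⟩ | ⟨h1, _⟩
      · obtain ⟨b, x⟩ := q
        simp only at h1 h2
        subst h1
        exact (hP₁ g).mp h x h2 ((ih x h2).mp hPq)
      · subst h1
        exact hdisj g ⟨h, (hfalse g).mp hPq⟩
      · simp at h1
end

section
/- Let R₁, R₂ be short impartial rulesets on Ω, let P₂ be the normal-play P-positions of R₂ and P₁⁻ the misère-play P-positions of R₁. If P₁⁻ ∩ P₂ = ∅ and every position g with no R₁-option belongs to P₂, then the P-positions (in normal play) of the push compound R₁ ⊙ R₂ are exactly {(1,g) : g ∈ P₁⁻}. -/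
theorem push_P_positions_eq_misere_P1
    {Ω : Type*} (R₁ R₂ : Ω → Set Ω)
    (hwf1 : WellFounded (fun g' g => g' ∈ R₁ g))
    (hwf2 : WellFounded (fun g' g => g' ∈ R₂ g))
    (P₁m P₂ : Ω → Prop)
    (hP₁m : ∀ g, P₁m g ↔ (R₁ g ≠ ∅ ∧ ∀ g' ∈ R₁ g, ¬ P₁m g'))
    (hP₂ : ∀ g, P₂ g ↔ ∀ g' ∈ R₂ g, ¬ P₂ g')
    (hdisj : ∀ g, ¬ (P₁m g ∧ P₂ g))
    (hterm : ∀ g, R₁ g = ∅ → P₂ g)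
    (Pc : Bool × Ω → Prop)
    (hPc : ∀ p, Pc p ↔ ∀ q, pushMove R₁ R₂ p q → ¬ Pc q) :
    ∀ g, Pc (true, g) ↔ P₁m g := by
  -- Step 1: Pc (false, g) ↔ P₂ g
  have hfalse : ∀ g, Pc (false, g) ↔ P₂ g := by
    intro g
    induction g using hwf2.induction with
    | _ g ih =>
      rw [hPc, hP₂]
      constructor
      · intro h g' hg' hP
        exact h (false, g') (Or.inr ⟨rfl, rfl, hg'⟩) ((ih g' hg').mpr hP)
      · rintro h q (⟨hq, _⟩ | ⟨_, hq1, hq2⟩)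
        · simp at hq
        · obtain ⟨b, x⟩ := q
          simp only at hq1 hq2
          subst hq1
          intro hPcq
          exact h x hq2 ((ih x hq2).mp hPcq)
  intro g
  induction g using hwf1.induction with
  | _ g ih =>
    rw [hPc, hP₁m]
    constructor
    · intro h
      constructor
      · intro hemp
        exact h (false, g) (Or.inl ⟨rfl, Or.inr rfl⟩)
          ((hfalse g).mpr (hterm g hemp))
      · intro g' hg' hP
        exact h (true, g') (Or.inl ⟨rfl, Or.inl ⟨rfl, hg'⟩⟩) ((ih g' hg').mpr hP)
    · rintro ⟨hne, hall⟩ q hmove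
      rcases hmove with ⟨_, (⟨hq1, hq2⟩ | hq)⟩ | ⟨hq, _⟩
      · obtain ⟨b, x⟩ := q
        simp only at hq1 hq2
        subst hq1
        intro hPcq
        exact hall x hq2 ((ih x hq2).mp hPcq)
      · subst hq
        rw [hfalse g]
        intro hP2
        exact hdisj g ⟨(hP₁m g).mpr ⟨hne, hall⟩, hP2⟩
      · simp at hq
end

section
/- Define sequences (A_n), (B_n) by A_0 = 0, B_0 = 1, A_n = mex{A_i, B_i : i < n}, B_n = ⌈Φ·A_n⌉ for n ≥ 1, with Φ the golden ratio. Then the sets {A_n : n ≥ 0} and {B_n : n ≥ 0} are disjoint and their union is all of ℕ. -/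
theorem AB_complementary
    (A B : ℕ → ℕ)
    (hA0 : A 0 = 0) (hB0 : B 0 = 1)
    (hA : ∀ n, 0 < n → A n = sInf {x : ℕ | ∀ i < n, x ≠ A i ∧ x ≠ B i})
    (hB : ∀ n, 0 < n → (B n : ℤ) = ⌈Φ * (A n : ℝ)⌉) :
    (∀ m n, A m ≠ B n) ∧ (∀ x : ℕ, (∃ n, A n = x) ∨ (∃ n, B n = x)) := by
  have hmem : ∀ n, 0 < n → ∀ i < n, A n ≠ A i ∧ A n ≠ B i := by
    intro n hn
    have hne : {x : ℕ | ∀ i < n, x ≠ A i ∧ x ≠ B i}.Nonempty := by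
      refine ⟨(Finset.range n).sup (fun i => max (A i) (B i)) + 1, ?_⟩
      intro i hi
      have hs : max (A i) (B i) ≤ (Finset.range n).sup (fun i => max (A i) (B i)) :=
        Finset.le_sup (f := fun i => max (A i) (B i)) (Finset.mem_range.mpr hi)
      have h1 : A i ≤ max (A i) (B i) := le_max_left _ _
      have h2 : B i ≤ max (A i) (B i) := le_max_right _ _
      omega
    have := Nat.sInf_mem hne
    rw [← hA n hn] at this
    exact this
  have hpos : ∀ n, 0 < n → 0 < A n := by
    intro n hn
    have := (hmem n hn 0 hn).1
    rw [hA0] at this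
    omega
  have hBA : ∀ n, A n < B n := by
    intro n
    rcases Nat.eq_zero_or_pos n with h | h
    · subst h; omega
    · have hΦ : 1 < Φ := by
        have h5 : (1:ℝ) < Real.sqrt 5 := by
          rw [show (1:ℝ) = Real.sqrt 1 by simp]
          exact Real.sqrt_lt_sqrt (by norm_num) (by norm_num)
        unfold Φ; linarith
      have hApos : (0:ℝ) < (A n : ℝ) := by exact_mod_cast hpos n h
      have h1 : ((A n : ℤ) : ℝ) < Φ * (A n : ℝ) := by push_cast; nlinarith
      have h2 : (A n : ℤ) < ⌈Φ * (A n : ℝ)⌉ := Int.lt_ceil.mpr h1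
      rw [← hB n h] at h2
      exact_mod_cast h2
  have hSM : StrictMono A := by
    intro m n hmn
    have hn : 0 < n := lt_of_le_of_lt (Nat.zero_le m) hmn
    rcases Nat.eq_zero_or_pos m with h | h
    · rw [h, hA0]; exact hpos n hn
    · have h1 : A m ≤ A n := by
        rw [hA m h]
        apply Nat.sInf_le
        intro i hi
        exact hmem n hn i (lt_trans hi hmn)
      have h2 := (hmem n hn m hmn).1
      omega
  constructor
  · intro m n
    rcases lt_or_ge n m with h | h
    · exact (hmem m (lt_of_le_of_lt (Nat.zero_le n) h) n h).2
    · have h1 := hSM.monotone h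
      have h2 := hBA n
      omega
  · intro x
    by_contra hc
    push_neg at hc
    obtain ⟨h1, h2⟩ := hc
    have hx : A (x+1) ≤ x := by
      rw [hA (x+1) (by omega)]
      apply Nat.sInf_le
      intro i _
      exact ⟨fun he => h1 i he.symm, fun he => h2 i he.symm⟩
    have : x+1 ≤ A (x+1) := hSM.le_apply
    omega
end

section
/- In the game Zeruclid on three heaps (moves: remove from any heap a positive multiple of the current smallest nonzero heap, keeping all heaps ≥ 0; the player unable to move loses), for any positive integers a ≤ b, there is at most one c in each congruence class modulo a such that (a,b,c) is a P-position; consequently, since every P-position (a,b,c) with a ≤ b ≤ c satisfies ⌈Φb⌉ ≤ c ≤ ⌈Φb⌉ + a − 1, if (a,b,c) and (a,b,c') are both P-positions with c ≡ c' (mod a), then c = c'. -/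
/-- `IsMinNZ x y z s` : `s` is the smallest nonzero entry among `x, y, z`. -/
def IsMinNZ (x y z s : ℕ) : Prop :=
  0 < s ∧ (s = x ∨ s = y ∨ s = z) ∧
    (0 < x → s ≤ x) ∧ (0 < y → s ≤ y) ∧ (0 < z → s ≤ z)

/-- The move relation of 3-heap Zeruclid: `zeruclidMove p q` means `q` is an
option of `p`, obtained by removing a positive multiple of the smallest nonzero
heap from one of the heaps, keeping it nonnegative. -/
def zeruclidMove (p q : ℕ × ℕ × ℕ) : Prop :=
  ∃ s k, IsMinNZ p.1 p.2.1 p.2.2 s ∧ 1 ≤ k ∧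
    ((k * s ≤ p.1 ∧ q = (p.1 - k * s, p.2.1, p.2.2)) ∨
     (k * s ≤ p.2.1 ∧ q = (p.1, p.2.1 - k * s, p.2.2)) ∨
     (k * s ≤ p.2.2 ∧ q = (p.1, p.2.1, p.2.2 - k * s)))

private lemma zeruclid_key (P : ℕ × ℕ × ℕ → Prop)
    (hP : ∀ p, P p ↔ ∀ q, zeruclidMove p q → ¬ P q)
    (a b c c' : ℕ) (ha : 0 < a) (hab : a ≤ b)
    (h1 : P (a, b, c)) (h2 : P (a, b, c')) (hmod : c % a = c' % a)
    (hlt : c < c') : False := by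
  have hdvd : a ∣ c' - c := (Nat.modEq_iff_dvd' hlt.le).mp hmod
  obtain ⟨k, hk⟩ := hdvd
  have hc' : c' = c + a * k := by omega
  subst hc'
  have hkpos : 1 ≤ k := by
    rcases Nat.eq_zero_or_pos k with h | h
    · subst h; simp at hlt
    · exact h
  have hmove : zeruclidMove (a, b, c + a * k) (a, b, c) := by
    refine ⟨a, k, ⟨ha, Or.inl rfl, fun _ => le_rfl, fun _ => hab, fun _ => by simp; nlinarith⟩,
      hkpos, Or.inr (Or.inr ⟨by simp [Nat.mul_comm], by simp [Nat.mul_comm]⟩)⟩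
  exact (hP (a, b, c + a * k)).mp h2 _ hmove h1

theorem zeruclid_P_unique_mod
    (P : ℕ × ℕ × ℕ → Prop)
    (hP : ∀ p, P p ↔ ∀ q, zeruclidMove p q → ¬ P q) :
    ∀ a b c c', 0 < a → a ≤ b →
      P (a, b, c) → P (a, b, c') → c % a = c' % a → c = c' := by
  intro a b c c' ha hab h1 h2 hmod
  rcases lt_trichotomy c c' with h | h | h
  · exact absurd (zeruclid_key P hP a b c c' ha hab h1 h2 hmod h) (by simp)
  · exact h
  · exact absurd (zeruclid_key P hP a b c' c ha hab h2 h1 hmod.symm h) (by simp)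
end

section
/- Consider the game on ℕ where from heap n (before the button is pushed) a player removes between 1 and k₁ tokens or pushes the button; after the button is pushed, a player removes between 1 and k₂ tokens; last player to move wins (the button push counts as a move). If a is the smallest positive integer with (k₁+1)·a ≡ −1 (mod k₂+1), then the sequence of outcomes n ↦ o(n) (with the button not yet pushed) is periodic with period a·(k₁+1) + 1. -/
/-- Move relation for the push compound of `Subtraction({1,…,k₁})` and
`Subtraction({1,…,k₂})`. Positions are `Bool × ℕ`, `(true, n)` meaning the
button has not yet been pushed. -/
def subPushMove (k₁ k₂ : ℕ) (p q : Bool × ℕ) : Prop :=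
  (p.1 = true ∧ q.1 = true ∧ ∃ i, 1 ≤ i ∧ i ≤ k₁ ∧ i ≤ p.2 ∧ q.2 = p.2 - i) ∨
  (p.1 = true ∧ q = (false, p.2)) ∨
  (p.1 = false ∧ q.1 = false ∧ ∃ i, 1 ≤ i ∧ i ≤ k₂ ∧ i ≤ p.2 ∧ q.2 = p.2 - i)

/-- The explicit conjectured P-position predicate. -/
private def pushQ (k₁ k₂ a : ℕ) : Bool × ℕ → Prop
  | (true, n) => n % (a * (k₁ + 1) + 1) % (k₁ + 1) = 1
  | (false, n) => n % (k₂ + 1) = 0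

private lemma sub_mod_of_le {T n i : ℕ} (hT : 0 < T) (hi : i ≤ n % T) :
    (n - i) % T = n % T - i := by
  obtain ⟨c, hc⟩ : ∃ c, n = T * c + n % T := ⟨n / T, by have := Nat.div_add_mod n T; omega⟩
  have hlt : n % T < T := Nat.mod_lt _ hT
  rw [show n - i = T * c + (n % T - i) from by omega, Nat.mul_add_mod,
    Nat.mod_eq_of_lt (by omega)]

private lemma sub_mod_of_gt {T n i : ℕ} (hT : 0 < T) (h1 : n % T < i) (h2 : i ≤ n)
    (h3 : i ≤ T + n % T) : (n - i) % T = T + n % T - i := by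
  obtain ⟨c, hc⟩ : ∃ c, n = T * c + n % T := ⟨n / T, by have := Nat.div_add_mod n T; omega⟩
  have hlt : n % T < T := Nat.mod_lt _ hT
  have hc1 : 1 ≤ c := by
    rcases Nat.eq_zero_or_pos c with h | h
    · subst h; omega
    · exact h
  obtain ⟨c', rfl⟩ : ∃ c', c = c' + 1 := ⟨c - 1, by omega⟩
  have hc' : T * (c' + 1) = T * c' + T := by ring
  rw [show n - i = T * c' + (T + n % T - i) from by omega, Nat.mul_add_mod,
    Nat.mod_eq_of_lt (by omega)]

/-- If two `P`-like predicates both satisfy the defining fixpoint property,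
they agree everywhere (the game is well-founded). -/
private lemma push_unique (k₁ k₂ : ℕ) (P Q : Bool × ℕ → Prop)
    (hP : ∀ p, P p ↔ ∀ q, subPushMove k₁ k₂ p q → ¬ P q)
    (hQ : ∀ p, Q p ↔ ∀ q, subPushMove k₁ k₂ p q → ¬ Q q) :
    ∀ p, P p ↔ Q p := by
  have mv_lt : ∀ p q : Bool × ℕ, subPushMove k₁ k₂ p q →
      2 * q.2 + (if q.1 then 1 else 0) < 2 * p.2 + (if p.1 then 1 else 0) := by
    rintro ⟨b, n⟩ ⟨b', n'⟩ h
    rcases h with ⟨h1, h2, i, hi1, hi2, hi3, hi4⟩ | ⟨h1, h2⟩ | ⟨h1, h2, i, hi1, hi2, hi3, hi4⟩ <;>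
      simp_all <;> omega
  have key : ∀ N p, 2 * p.2 + (if p.1 then 1 else 0) ≤ N → (P p ↔ Q p) := by
    intro N
    induction N with
    | zero =>
      rintro ⟨b, n⟩ hle
      have hb : b = false := by cases b <;> simp_all
      have hn : n = 0 := by omega
      subst hb; subst hn
      have hnomove : ∀ q, ¬ subPushMove k₁ k₂ (false, 0) q := by
        rintro q (⟨h1, _⟩ | ⟨h1, _⟩ | ⟨_, _, i, hi1, _, hi3, _⟩) <;> simp_all
      rw [hP, hQ]
      constructor <;> intro _ q hq <;> exact absurd hq (hnomove q)
    | succ N ih =>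
      intro p hle
      rw [hP, hQ]
      constructor <;> intro h q hq
      · rw [← ih q (by have := mv_lt p q hq; omega)]; exact h q hq
      · rw [ih q (by have := mv_lt p q hq; omega)]; exact h q hq
  exact fun p => key _ p le_rfl

private lemma pushQ_fix
    (k₁ k₂ : ℕ) (hk₁ : 1 ≤ k₁) (hk₂ : 1 ≤ k₂)
    (a : ℕ) (ha : 0 < a) (hamod : (k₁ + 1) * a % (k₂ + 1) = k₂)
    (hamin : ∀ a', 0 < a' → (k₁ + 1) * a' % (k₂ + 1) = k₂ → a ≤ a') :
    ∀ p, pushQ k₁ k₂ a p ↔ ∀ q, subPushMove k₁ k₂ p q → ¬ pushQ k₁ k₂ a q := by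
  set m := k₁ + 1 with hm
  set M := k₂ + 1 with hM
  set T := a * m + 1 with hT
  have hm2 : 2 ≤ m := by omega
  have hM2 : 2 ≤ M := by omega
  have hT0 : 0 < T := by positivity
  have hmT : m ≤ T := by
    have : 1 * m ≤ a * m := Nat.mul_le_mul_right m ha
    omega
  -- M divides T
  have hMT : M ∣ T := by
    obtain ⟨c, hc⟩ : ∃ c, m * a = M * c + k₂ :=
      ⟨m * a / M, by have := Nat.div_add_mod (m * a) M; omega⟩
    refine ⟨c + 1, ?_⟩
    have h2 : M * (c + 1) = M * c + M := by ring
    have h3 : a * m = m * a := mul_comm a m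
    omega
  have hTm : T % m = 1 := by
    rw [hT, mul_comm a m, Nat.mul_add_mod, Nat.mod_eq_of_lt hm2]
  rintro ⟨b, n⟩
  cases b
  · -- button already pushed : plain subtraction game mod M
    show n % M = 0 ↔ _
    constructor
    · intro h0 q hq
      rcases hq with ⟨h1, _⟩ | ⟨h1, _⟩ | ⟨_, h2, i, hi1, hi2, hi3, hi4⟩
      · simp at h1
      · simp at h1
      · obtain ⟨b', n'⟩ := q
        simp only at h2 hi4
        subst h2; subst hi4
        show ¬ (n - i) % M = 0
        intro h0'
        have d1 : M ∣ n := Nat.dvd_of_mod_eq_zero h0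
        have d2 : M ∣ n - i := Nat.dvd_of_mod_eq_zero h0'
        have d3 : M ∣ i := by
          have := Nat.dvd_sub d1 d2
          rwa [Nat.sub_sub_self hi3] at this
        have := Nat.le_of_dvd (by omega) d3
        omega
    · intro hall
      by_contra h0
      have hi1 : 1 ≤ n % M := by omega
      have hi2 : n % M ≤ k₂ := by have := Nat.mod_lt n (show 0 < M by omega); omega
      have hi3 : n % M ≤ n := Nat.mod_le n M
      have := hall (false, n % M - n % M + (n - n % M))
      have hmv : subPushMove k₁ k₂ (false, n) (false, n - n % M) := by
        right; right
        exact ⟨rfl, rfl, n % M, hi1, hi2, hi3, rfl⟩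
      have := hall _ hmv
      apply this
      show (n - n % M) % M = 0
      rw [sub_mod_of_le (by omega) le_rfl]
      simp
  · -- button not pushed
    show n % T % m = 1 ↔ _
    have hrT : n % T < T := Nat.mod_lt _ hT0
    have hnM : n % M = n % T % M := (Nat.mod_mod_of_dvd n hMT).symm
    constructor
    · intro h1 q hq
      rcases hq with ⟨_, h2, i, hi1, hi2, hi3, hi4⟩ | ⟨_, h2⟩ | ⟨hb, _⟩
      · -- removing i tokens, button still unpushed
        obtain ⟨b', n'⟩ := q
        simp only at h2 hi4; subst h2; subst hi4
        show ¬ (n - i) % T % m = 1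
        intro h1'
        have hr1 : 1 ≤ n % T := by
          rcases Nat.eq_zero_or_pos (n % T) with h | h
          · exfalso; rw [h] at h1; simp at h1
          · exact h
        rcases le_or_gt i (n % T) with hile | higt
        · rw [sub_mod_of_le hT0 hile] at h1'
          -- n % T ≡ 1 and n % T - i ≡ 1 mod m, so m ∣ i
          have heq : (n % T - i) % m = n % T % m := by omega
          have : m ∣ n % T - (n % T - i) :=
            (Nat.modEq_iff_dvd' (by omega)).mp heq
          rw [Nat.sub_sub_self hile] at this
          have := Nat.le_of_dvd (by omega) this
          omega
        · -- then n % T = 1 since n % T < i ≤ k₁ < m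
          have hr : n % T < m := by omega
          have hr1' : n % T = 1 := by rw [Nat.mod_eq_of_lt hr] at h1; exact h1
          rw [sub_mod_of_gt hT0 higt hi3 (by omega)] at h1'
          rw [hr1'] at h1'
          -- (T + 1 - i) % m = 1 = T % m, so m ∣ i - 1
          have heq : (T + 1 - i) % m = T % m := by omega
          have hd : m ∣ T - (T + 1 - i) :=
            (Nat.modEq_iff_dvd' (by omega)).mp heq
          have : T - (T + 1 - i) = i - 1 := by omega
          rw [this] at hd
          have hi2' : 2 ≤ i := by omega
          have := Nat.le_of_dvd (by omega) hd
          omega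
      · -- pushing the button
        subst h2
        show ¬ n % M = 0
        intro h0
        rw [hnM] at h0
        -- n % T ≡ 1 mod m and ≡ 0 mod M
        obtain ⟨j, hj⟩ : ∃ j, n % T = m * j + 1 :=
          ⟨n % T / m, by have := Nat.div_add_mod (n % T) m; omega⟩
        have hjlt : j < a := by
          by_contra hja
          have : m * a ≤ m * j := Nat.mul_le_mul_left m (by omega)
          have h3 : a * m = m * a := mul_comm a m
          omega
        obtain ⟨t, ht⟩ := Nat.dvd_of_mod_eq_zero h0
        rcases Nat.eq_zero_or_pos j with hj0 | hj0
        · subst hj0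
          simp at hj
          rw [hj] at ht
          rcases Nat.eq_zero_or_pos t with h | h
          · rw [h, Nat.mul_zero] at ht; omega
          · have h4 : M * 1 ≤ M * t := Nat.mul_le_mul_left M h
            have h5 : M * 1 = M := by ring
            omega
        · -- m*j + 1 = M*t, so m*j % M = k₂, contradicting minimality of a
          have ht1 : 1 ≤ t := by
            rcases Nat.eq_zero_or_pos t with h | h
            · rw [h] at ht; simp at ht; omega
            · exact h
          obtain ⟨t', rfl⟩ : ∃ t', t = t' + 1 := ⟨t - 1, by omega⟩
          have hexp : M * (t' + 1) = M * t' + M := by ring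
          have hmj : m * j = M * t' + k₂ := by omega
          have : m * j % M = k₂ := by
            rw [hmj, Nat.mul_add_mod, Nat.mod_eq_of_lt (by omega)]
          have := hamin j hj0 this
          omega
      · simp at hb
    · -- backward: if all options are not Q then n is Q
      intro hall
      by_contra h1
      rcases Nat.eq_zero_or_pos (n % T) with hr0 | hr0
      · -- n ≡ 0 mod T, so n ≡ 0 mod M : pushing the button reaches a Q position
        have hmv : subPushMove k₁ k₂ (true, n) (false, n) := by
          right; left; exact ⟨rfl, rfl⟩
        apply hall _ hmv
        show n % M = 0
        rw [hnM, hr0, Nat.zero_mod]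
      · set s := n % T % m with hs
        have hsm : s < m := Nat.mod_lt _ (by omega)
        have hsr : s ≤ n % T := Nat.mod_le _ _
        obtain ⟨c, hc⟩ : ∃ c, n % T = m * c + s :=
          ⟨n % T / m, by have := Nat.div_add_mod (n % T) m; omega⟩
        rcases Nat.eq_zero_or_pos s with hs0 | hs1
        · -- s = 0 : remove k₁ tokens
          have hc1 : 1 ≤ c := by
            rcases Nat.eq_zero_or_pos c with h | h
            · exfalso; rw [h] at hc; simp at hc; omega
            · exact h
          have hik : k₁ ≤ n % T := by
            have : m * 1 ≤ m * c := Nat.mul_le_mul_left m hc1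
            omega
          have hmv : subPushMove k₁ k₂ (true, n) (true, n - k₁) := by
            left
            exact ⟨rfl, rfl, k₁, hk₁, le_rfl, le_trans hik (Nat.mod_le n T), rfl⟩
          apply hall _ hmv
          show (n - k₁) % T % m = 1
          rw [sub_mod_of_le hT0 hik]
          obtain ⟨c', rfl⟩ : ∃ c', c = c' + 1 := ⟨c - 1, by omega⟩
          have hexp : m * (c' + 1) = m * c' + m := by ring
          rw [show n % T - k₁ = m * c' + 1 from by omega, Nat.mul_add_mod,
            Nat.mod_eq_of_lt (by omega)]
        · -- 1 ≤ s, s ≠ 1 so 2 ≤ s : remove s - 1 tokens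
          have hs2 : 2 ≤ s := by omega
          have hile : s - 1 ≤ n % T := by omega
          have hmv : subPushMove k₁ k₂ (true, n) (true, n - (s - 1)) := by
            left
            exact ⟨rfl, rfl, s - 1, by omega, by omega,
              le_trans hile (Nat.mod_le n T), rfl⟩
          apply hall _ hmv
          show (n - (s - 1)) % T % m = 1
          rw [sub_mod_of_le hT0 hile]
          rw [show n % T - (s - 1) = m * c + 1 from by omega, Nat.mul_add_mod,
            Nat.mod_eq_of_lt (by omega)]

theorem subtraction_push_periodic
    (k₁ k₂ : ℕ) (hk₁ : 1 ≤ k₁) (hk₂ : 1 ≤ k₂)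
    (a : ℕ) (ha : 0 < a) (hamod : (k₁ + 1) * a % (k₂ + 1) = k₂)
    (hamin : ∀ a', 0 < a' → (k₁ + 1) * a' % (k₂ + 1) = k₂ → a ≤ a')
    (P : Bool × ℕ → Prop)
    (hP : ∀ p, P p ↔ ∀ q, subPushMove k₁ k₂ p q → ¬ P q) :
    ∀ n, P (true, n + (a * (k₁ + 1) + 1)) ↔ P (true, n) := by
  have hQ := pushQ_fix k₁ k₂ hk₁ hk₂ a ha hamod hamin
  have hPQ := push_unique k₁ k₂ P (pushQ k₁ k₂ a) hP hQ
  intro n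
  rw [hPQ, hPQ]
  show (n + (a * (k₁ + 1) + 1)) % (a * (k₁ + 1) + 1) % (k₁ + 1) = 1 ↔
    n % (a * (k₁ + 1) + 1) % (k₁ + 1) = 1
  rw [Nat.add_mod_right]
end
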